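/- Let I_k = [(k−1)/4, k/4) for k = 1,2,3,4. Then the combined system E(I_1 ∪ I_3, 4ℤ ∪ (4ℤ+2)) ∪ E(I_2 ∪ I_4, (4ℤ+1) ∪ (4ℤ+3)) is not a Riesz basis for L²[0,1). -/

import Mathlib

/-!
The vector `χ_{I₁} - χ_{I₃}` is nonzero and orthogonal to the whole system, so the closed span
of the system is a proper subspace. Orthogonality to the second family is disjointness of
supports. For the first family, `4ℤ ∪ (4ℤ + 2) = 2ℤ`, so its exponentials are `1/2`-periodic and
have equal integrals over `I₁` and `I₃ = I₁ + 1/2`.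
-/

open MeasureTheory Complex Real Set
open scoped Classical

noncomputable section

/-- Lebesgue measure restricted to `[0,1)`. -/
def μ01 : MeasureTheory.Measure ℝ := MeasureTheory.volume.restrict (Set.Ico (0:ℝ) 1)

/-- The Hilbert space `L²[0,1)` of complex square-integrable functions on `[0,1)`. -/
abbrev L2 : Type := MeasureTheory.Lp ℂ 2 μ01

/-- A function on ℝ as an element of `L²[0,1)` (junk value `0` if not in `L²`). -/
def toL2 (f : ℝ → ℂ) : L2 :=
  if h : MeasureTheory.MemLp f 2 μ01 then h.toLp f else 0

/-- The function `x ↦ e^{2πiλx} · χ_S(x)` as an element of `L²[0,1)`. -/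
def expChar (S : Set ℝ) (lam : ℝ) : L2 :=
  toL2 (S.indicator fun x => Complex.exp (2 * Real.pi * lam * x * Complex.I))

/-- `L²(S)` viewed as the subset of `L²[0,1)` of elements vanishing a.e. outside `S`. -/
def L2on (S : Set ℝ) : Set L2 := {g : L2 | ∀ᵐ x ∂μ01, x ∉ S → g x = 0}

/-- A family is a Riesz sequence: there are `0 < A ≤ B` giving a two-sided ℓ²-norm
equivalence on (finite) linear combinations. -/
def IsRieszSequence {ι : Type*} (f : ι → L2) : Prop :=
  ∃ A B : ℝ, 0 < A ∧ A ≤ B ∧ ∀ c : ι →₀ ℂ,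
    A * ∑ i ∈ c.support, ‖c i‖ ^ 2 ≤ ‖∑ i ∈ c.support, c i • f i‖ ^ 2 ∧
    ‖∑ i ∈ c.support, c i • f i‖ ^ 2 ≤ B * ∑ i ∈ c.support, ‖c i‖ ^ 2

/-- A family is a Riesz basis for the subspace of `L²[0,1)` given by the subset `V`:
it is a Riesz sequence whose closed linear span is `V`. -/
def IsRieszBasis {ι : Type*} (f : ι → L2) (V : Set L2) : Prop :=
  IsRieszSequence f ∧ closure (↑(Submodule.span ℂ (Set.range f)) : Set L2) = V

instance : IsFiniteMeasure μ01 := by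
  rw [μ01]
  infer_instance

lemma memLp_indicator_exp {S : Set ℝ} (hS : MeasurableSet S) (a : ℝ) :
    MemLp (S.indicator fun x => exp (2 * π * a * x * I)) 2 μ01 := by
  refine MemLp.of_bound (Measurable.indicator (by fun_prop) hS).aestronglyMeasurable 1
    (Filter.Eventually.of_forall fun x => ?_)
  refine (norm_indicator_le_norm_self _ x).trans_eq ?_
  rw [show 2 * (π : ℂ) * a * x * I = ((2 * π * a * x : ℝ) : ℂ) * I by push_cast; ring,
    norm_exp_ofReal_mul_I]

lemma inner_toL2 {f g : ℝ → ℂ} (hf : MemLp f 2 μ01) (hg : MemLp g 2 μ01) :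
    inner ℂ (toL2 f) (toL2 g) = ∫ x, starRingEnd ℂ (f x) * g x ∂μ01 := by
  rw [toL2, dif_pos hf, toL2, dif_pos hg, L2.inner_def]
  refine integral_congr_ae ?_
  filter_upwards [hf.coeFn_toLp, hg.coeFn_toLp] with x hfx hgx
  rw [hfx, hgx, RCLike.inner_apply']

lemma conj_exp_mul_exp (a b x : ℝ) :
    starRingEnd ℂ (exp (2 * π * a * x * I)) * exp (2 * π * b * x * I)
      = exp (2 * π * (b - a) * x * I) := by
  rw [← exp_conj, ← Complex.exp_add]
  congr 1
  simp only [map_mul, map_ofNat, conj_ofReal, conj_I]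
  ring

lemma inner_expChar {A B : Set ℝ} (hA : MeasurableSet A) (hB : MeasurableSet B) (a b : ℝ) :
    inner ℂ (expChar A a) (expChar B b) = ∫ x in A ∩ B, exp (2 * π * (b - a) * x * I) ∂μ01 := by
  rw [expChar, expChar, inner_toL2 (memLp_indicator_exp hA a) (memLp_indicator_exp hB b),
    ← integral_indicator (hA.inter hB)]
  congr 1
  ext x
  by_cases hxA : x ∈ A <;> by_cases hxB : x ∈ B <;>
    simp [hxA, hxB, conj_exp_mul_exp]

lemma inner_expChar_of_disjoint {A B : Set ℝ} (hA : MeasurableSet A) (hB : MeasurableSet B)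
    (hAB : Disjoint A B) (a b : ℝ) : inner ℂ (expChar A a) (expChar B b) = 0 := by
  rw [inner_expChar hA hB, hAB.inter_eq, setIntegral_empty]

lemma setIntegral_Ico_μ01 {a b : ℝ} (ha : 0 ≤ a) (hab : a ≤ b) (hb : b ≤ 1) (f : ℝ → ℂ) :
    ∫ x in Ico a b, f x ∂μ01 = ∫ x in a..b, f x := by
  rw [μ01, Measure.restrict_restrict measurableSet_Ico,
    inter_eq_left.mpr (Ico_subset_Ico ha hb), setIntegral_congr_set Ico_ae_eq_Ioc,
    intervalIntegral.integral_of_le hab]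

lemma periodic_exp_of_even {n : ℤ} (hn : Even n) :
    Function.Periodic (fun x : ℝ => exp (2 * π * (n : ℝ) * x * I)) (1 / 2) := by
  obtain ⟨m, rfl⟩ := hn
  intro x
  dsimp only
  rw [← mul_one (exp (2 * π * ((m + m : ℤ) : ℝ) * x * I)), ← exp_int_mul_two_pi_mul_I m,
    ← Complex.exp_add]
  congr 1
  push_cast
  ring

lemma setIntegral_exp_Ico_add_half {n : ℤ} (hn : Even n) :
    ∫ x in Ico (2/4 : ℝ) (3/4), exp (2 * π * (n : ℝ) * x * I) ∂μ01
      = ∫ x in Ico (0 : ℝ) (1/4), exp (2 * π * (n : ℝ) * x * I) ∂μ01 := by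
  rw [setIntegral_Ico_μ01 (by norm_num) (by norm_num) (by norm_num),
    setIntegral_Ico_μ01 (by norm_num) (by norm_num) (by norm_num)]
  have h := intervalIntegral.integral_comp_add_right (fun x : ℝ => exp (2 * π * (n : ℝ) * x * I))
    (1 / 2) (a := 0) (b := 1 / 4)
  rw [(periodic_exp_of_even hn).funext] at h
  rw [h]
  norm_num

lemma closure_span_ne_univ_of_inner_eq_zero {E ι : Type*} [NormedAddCommGroup E]
    [InnerProductSpace ℂ E] {f : ι → E} {v : E} (hv : v ≠ 0) (hf : ∀ i, inner ℂ v (f i) = 0) :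
    closure (Submodule.span ℂ (range f) : Set E) ≠ univ := by
  intro h
  have hker := closure_minimal (s := (Submodule.span ℂ (range f) : Set E))
    (Submodule.span_le.mpr (range_subset_iff.mpr fun i => by simpa using hf i))
    (innerSL ℂ v).isClosed_ker
  exact hv (inner_self_eq_zero.mp (hker (h ▸ mem_univ v)))

/-- With `I_k = [(k−1)/4, k/4)`, the combined system
`E(I_1 ∪ I_3, 4ℤ ∪ (4ℤ+2)) ∪ E(I_2 ∪ I_4, (4ℤ+1) ∪ (4ℤ+3))` is not a Riesz basis for
`L²[0,1)`. -/
theorem stmt_17 :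
    ¬ IsRieszBasis
        (Sum.elim
          (fun l : {n : ℤ // n % 4 = 0 ∨ n % 4 = 2} =>
            expChar (Set.Ico (0 : ℝ) (1/4) ∪ Set.Ico (2/4 : ℝ) (3/4)) (((l : ℤ) : ℝ)))
          (fun l : {n : ℤ // n % 4 = 1 ∨ n % 4 = 3} =>
            expChar (Set.Ico (1/4 : ℝ) (2/4) ∪ Set.Ico (3/4 : ℝ) 1) (((l : ℤ) : ℝ))))
        Set.univ := by
  rintro ⟨-, hspan⟩
  have hI : MeasurableSet (Ico (0 : ℝ) (1/4) ∪ Ico (2/4) (3/4)) :=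
    measurableSet_Ico.union measurableSet_Ico
  have hJ : MeasurableSet (Ico (1/4 : ℝ) (2/4) ∪ Ico (3/4) 1) :=
    measurableSet_Ico.union measurableSet_Ico
  set w := expChar (Ico 0 (1/4)) 0 - expChar (Ico (2/4) (3/4)) 0
  have hw : inner ℂ w (expChar (Ico 0 (1/4)) 0) = 1/4 := by
    rw [inner_sub_left, inner_expChar_of_disjoint (A := Ico (2/4) (3/4)) measurableSet_Ico
      measurableSet_Ico (Ico_disjoint_Ico.mpr (by norm_num)), sub_zero,
      inner_expChar measurableSet_Ico measurableSet_Ico, inter_self,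
      setIntegral_Ico_μ01 le_rfl (by norm_num) (by norm_num)]
    simp
  refine closure_span_ne_univ_of_inner_eq_zero (v := w) ?_ ?_ hspan
  · intro hw0
    norm_num [hw0] at hw
  · rintro (⟨n, hn⟩ | ⟨n, -⟩)
    · have hn : Even n := Int.even_iff.mpr (by omega)
      rw [Sum.elim_inl, inner_sub_left, inner_expChar measurableSet_Ico hI,
        inner_expChar measurableSet_Ico hI, inter_eq_left.mpr subset_union_left,
        inter_eq_left.mpr subset_union_right, ofReal_zero, sub_zero,
        setIntegral_exp_Ico_add_half hn, sub_self]
    · rw [Sum.elim_inr, inner_sub_left]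
      iterate 2 rw [inner_expChar_of_disjoint measurableSet_Ico hJ
        (disjoint_union_right.mpr ⟨Ico_disjoint_Ico.mpr (by norm_num),
          Ico_disjoint_Ico.mpr (by norm_num)⟩)]
      exact sub_self 0
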